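/- In the multi-head setting, suppose for every l ∈ [L] and every head-index sequence (h_1,...,h_l) ∈ [H]^l the conditions (W_V^{1,h_1}W_O^{1,h_1} ··· W_V^{l-1,h_{l-1}}W_O^{l-1,h_{l-1}}) W_Q^{l,h_l} = E R_V^{1,h_1} ··· R_V^{l-1,h_{l-1}} R_Q^{l,h_l} and analogously for keys hold. Then for any input X^0, the attention matrices match at every layer and head: A^{l,h} = Ã^{l,h} for all l ∈ [L], h ∈ [H]. -/
import Mathlib


open Matrix

/-- Row-wise softmax of a matrix. -/
noncomputable def softmax {n k : ℕ} (M : Matrix (Fin n) (Fin k) ℝ) :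
    Matrix (Fin n) (Fin k) ℝ :=
  Matrix.of fun i j => Real.exp (M i j) / ∑ t, Real.exp (M i t)

/-- Attention matrix `softmax((X W_Q)(X W_K)ᵀ)`. -/
noncomputable def attn {n p d : ℕ} (WQ WK : Matrix (Fin p) (Fin d) ℝ)
    (X : Matrix (Fin n) (Fin p) ℝ) : Matrix (Fin n) (Fin n) ℝ :=
  softmax ((X * WQ) * (X * WK)ᵀ)

/-- Target multi-head transformer layers. -/
noncomputable def mLayers {n din d H : ℕ}
    (WQ WK WV : ℕ → Fin H → Matrix (Fin din) (Fin d) ℝ)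
    (WO : ℕ → Fin H → Matrix (Fin d) (Fin din) ℝ)
    (X0 : Matrix (Fin n) (Fin din) ℝ) : ℕ → Matrix (Fin n) (Fin din) ℝ
  | 0 => X0
  | l + 1 =>
      ∑ h : Fin H,
        attn (WQ l h) (WK l h) (mLayers WQ WK WV WO X0 l) *
          mLayers WQ WK WV WO X0 l * WV l h * WO l h

/-- Universal multi-head transformer layers, run on embedded input `X^0 E`. -/
noncomputable def uLayers {n din d m H : ℕ}
    (RQ RK : ℕ → Fin H → Matrix (Fin m) (Fin d) ℝ)
    (RV : ℕ → Fin H → Matrix (Fin m) (Fin m) ℝ)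
    (E : Matrix (Fin din) (Fin m) ℝ)
    (X0 : Matrix (Fin n) (Fin din) ℝ) : ℕ → Matrix (Fin n) (Fin m) ℝ
  | 0 => X0 * E
  | l + 1 =>
      ∑ h : Fin H,
        attn (RQ l h) (RK l h) (uLayers RQ RK RV E X0 l) *
          uLayers RQ RK RV E X0 l * RV l h

/-- `wPath hs l = (W_V^{1,h_1} W_O^{1,h_1}) ⋯ (W_V^{l,h_l} W_O^{l,h_l})`. -/
noncomputable def wPath {din d H : ℕ}
    (WV : ℕ → Fin H → Matrix (Fin din) (Fin d) ℝ)
    (WO : ℕ → Fin H → Matrix (Fin d) (Fin din) ℝ)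
    (hs : ℕ → Fin H) : ℕ → Matrix (Fin din) (Fin din) ℝ
  | 0 => 1
  | l + 1 => wPath WV WO hs l * (WV l (hs l) * WO l (hs l))

/-- `rPath hs l = R_V^{1,h_1} ⋯ R_V^{l,h_l}`. -/
noncomputable def rPath {m H : ℕ}
    (RV : ℕ → Fin H → Matrix (Fin m) (Fin m) ℝ)
    (hs : ℕ → Fin H) : ℕ → Matrix (Fin m) (Fin m) ℝ
  | 0 => 1
  | l + 1 => rPath RV hs l * RV l (hs l)


lemma wPath_congr {din d H : ℕ}
    (WV : ℕ → Fin H → Matrix (Fin din) (Fin d) ℝ)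
    (WO : ℕ → Fin H → Matrix (Fin d) (Fin din) ℝ)
    (hs hs' : ℕ → Fin H) :
    ∀ l, (∀ i, i < l → hs i = hs' i) → wPath WV WO hs l = wPath WV WO hs' l := by
  intro l
  induction l with
  | zero => intro _; rfl
  | succ l ih =>
      intro h
      simp only [wPath, ih (fun i hi => h i (hi.trans (Nat.lt_succ_self l))),
        h l (Nat.lt_succ_self l)]

lemma rPath_congr {m H : ℕ}
    (RV : ℕ → Fin H → Matrix (Fin m) (Fin m) ℝ)
    (hs hs' : ℕ → Fin H) :
    ∀ l, (∀ i, i < l → hs i = hs' i) → rPath RV hs l = rPath RV hs' l := by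
  intro l
  induction l with
  | zero => intro _; rfl
  | succ l ih =>
      intro h
      simp only [rPath, ih (fun i hi => h i (hi.trans (Nat.lt_succ_self l))),
        h l (Nat.lt_succ_self l)]

lemma key_lemma {n din d m H L : ℕ}
    (WQ WK WV : ℕ → Fin H → Matrix (Fin din) (Fin d) ℝ)
    (WO : ℕ → Fin H → Matrix (Fin d) (Fin din) ℝ)
    (RQ RK : ℕ → Fin H → Matrix (Fin m) (Fin d) ℝ)
    (RV : ℕ → Fin H → Matrix (Fin m) (Fin m) ℝ)
    (E : Matrix (Fin din) (Fin m) ℝ)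
    (hQ : ∀ (hs : ℕ → Fin H), ∀ l < L,
      wPath WV WO hs l * WQ l (hs l) = E * rPath RV hs l * RQ l (hs l))
    (hK : ∀ (hs : ℕ → Fin H), ∀ l < L,
      wPath WV WO hs l * WK l (hs l) = E * rPath RV hs l * RK l (hs l))
    (X0 : Matrix (Fin n) (Fin din) ℝ) (h0 : Fin H) :
    ∀ l, l ≤ L → ∀ (B : Matrix (Fin din) (Fin d) ℝ) (C : Matrix (Fin m) (Fin d) ℝ),
      (∀ hs : ℕ → Fin H, wPath WV WO hs l * B = E * rPath RV hs l * C) →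
      mLayers WQ WK WV WO X0 l * B = uLayers RQ RK RV E X0 l * C := by
  intro l
  induction l with
  | zero =>
      intro _ B C hBC
      have h := hBC (fun _ => h0)
      simp only [wPath, rPath, Matrix.one_mul, Matrix.mul_one] at h
      simp only [mLayers, uLayers, h, Matrix.mul_assoc]
  | succ l ih =>
      intro hlL B C hBC
      have hl : l < L := Nat.lt_of_succ_le hlL
      -- condition transfer for a fixed head h and the V/O continuation
      have hcond : ∀ h : Fin H,
          ∀ hs : ℕ → Fin H,
            wPath WV WO hs l * (WV l h * WO l h * B)
              = E * rPath RV hs l * (RV l h * C) := by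
        intro h hs
        have h1 := hBC (Function.update hs l h)
        have hw : wPath WV WO (Function.update hs l h) l = wPath WV WO hs l :=
          wPath_congr _ _ _ _ l (fun i hi => Function.update_of_ne (Nat.ne_of_lt hi) _ _)
        have hr : rPath RV (Function.update hs l h) l = rPath RV hs l :=
          rPath_congr _ _ _ l (fun i hi => Function.update_of_ne (Nat.ne_of_lt hi) _ _)
        simp only [wPath, rPath, hw, hr, Function.update_self] at h1
        calc wPath WV WO hs l * (WV l h * WO l h * B)
            = wPath WV WO hs l * (WV l h * WO l h) * B := by
              simp only [Matrix.mul_assoc]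
          _ = E * rPath RV hs l * (RV l h * C) := by
              rw [h1]; simp only [Matrix.mul_assoc]
      -- attention equality at layer l
      have hattn : ∀ h : Fin H,
          attn (WQ l h) (WK l h) (mLayers WQ WK WV WO X0 l)
            = attn (RQ l h) (RK l h) (uLayers RQ RK RV E X0 l) := by
        intro h
        have hq : mLayers WQ WK WV WO X0 l * WQ l h
            = uLayers RQ RK RV E X0 l * RQ l h := by
          apply ih (le_of_lt hl)
          intro hs
          have := hQ (Function.update hs l h) l hl
          have hw : wPath WV WO (Function.update hs l h) l = wPath WV WO hs l :=
            wPath_congr _ _ _ _ l (fun i hi => Function.update_of_ne (Nat.ne_of_lt hi) _ _)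
          have hr : rPath RV (Function.update hs l h) l = rPath RV hs l :=
            rPath_congr _ _ _ l (fun i hi => Function.update_of_ne (Nat.ne_of_lt hi) _ _)
          simpa only [hw, hr, Function.update_self] using this
        have hk : mLayers WQ WK WV WO X0 l * WK l h
            = uLayers RQ RK RV E X0 l * RK l h := by
          apply ih (le_of_lt hl)
          intro hs
          have := hK (Function.update hs l h) l hl
          have hw : wPath WV WO (Function.update hs l h) l = wPath WV WO hs l :=
            wPath_congr _ _ _ _ l (fun i hi => Function.update_of_ne (Nat.ne_of_lt hi) _ _)
          have hr : rPath RV (Function.update hs l h) l = rPath RV hs l :=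
            rPath_congr _ _ _ l (fun i hi => Function.update_of_ne (Nat.ne_of_lt hi) _ _)
          simpa only [hw, hr, Function.update_self] using this
        unfold attn
        rw [hq, hk]
      -- now unfold the layer
      simp only [mLayers, uLayers]
      rw [Matrix.sum_mul, Matrix.sum_mul]
      apply Finset.sum_congr rfl
      intro h _
      have hx : mLayers WQ WK WV WO X0 l * (WV l h * WO l h * B)
          = uLayers RQ RK RV E X0 l * (RV l h * C) :=
        ih (le_of_lt hl) _ _ (hcond h)
      calc attn (WQ l h) (WK l h) (mLayers WQ WK WV WO X0 l) *
              mLayers WQ WK WV WO X0 l * WV l h * WO l h * B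
          = attn (WQ l h) (WK l h) (mLayers WQ WK WV WO X0 l) *
              (mLayers WQ WK WV WO X0 l * (WV l h * WO l h * B)) := by
            simp only [Matrix.mul_assoc]
        _ = attn (RQ l h) (RK l h) (uLayers RQ RK RV E X0 l) *
              (uLayers RQ RK RV E X0 l * (RV l h * C)) := by
            rw [hattn h, hx]
        _ = attn (RQ l h) (RK l h) (uLayers RQ RK RV E X0 l) *
              uLayers RQ RK RV E X0 l * RV l h * C := by
            simp only [Matrix.mul_assoc]

/-- equal attention, multi-head: if for every layer
`l ∈ [L]` and every head-index sequence the per-path query/key matching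
conditions hold, then all attention matrices of the target and universal
transformers coincide, at every layer and head. -/
theorem stmt5 {n din d m H L : ℕ}
    (WQ WK WV : ℕ → Fin H → Matrix (Fin din) (Fin d) ℝ)
    (WO : ℕ → Fin H → Matrix (Fin d) (Fin din) ℝ)
    (RQ RK : ℕ → Fin H → Matrix (Fin m) (Fin d) ℝ)
    (RV : ℕ → Fin H → Matrix (Fin m) (Fin m) ℝ)
    (E : Matrix (Fin din) (Fin m) ℝ)
    (hQ : ∀ (hs : ℕ → Fin H), ∀ l < L,
      wPath WV WO hs l * WQ l (hs l) = E * rPath RV hs l * RQ l (hs l))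
    (hK : ∀ (hs : ℕ → Fin H), ∀ l < L,
      wPath WV WO hs l * WK l (hs l) = E * rPath RV hs l * RK l (hs l))
    (X0 : Matrix (Fin n) (Fin din) ℝ) :
    ∀ l < L, ∀ h : Fin H,
      attn (WQ l h) (WK l h) (mLayers WQ WK WV WO X0 l) =
        attn (RQ l h) (RK l h) (uLayers RQ RK RV E X0 l) := by
  intro l hl h
  have hq : mLayers WQ WK WV WO X0 l * WQ l h = uLayers RQ RK RV E X0 l * RQ l h := by
    apply key_lemma WQ WK WV WO RQ RK RV E hQ hK X0 h l (le_of_lt hl)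
    intro hs
    have := hQ (Function.update hs l h) l hl
    have hw : wPath WV WO (Function.update hs l h) l = wPath WV WO hs l :=
      wPath_congr _ _ _ _ l (fun i hi => Function.update_of_ne (Nat.ne_of_lt hi) _ _)
    have hr : rPath RV (Function.update hs l h) l = rPath RV hs l :=
      rPath_congr _ _ _ l (fun i hi => Function.update_of_ne (Nat.ne_of_lt hi) _ _)
    simpa only [hw, hr, Function.update_self] using this
  have hk : mLayers WQ WK WV WO X0 l * WK l h = uLayers RQ RK RV E X0 l * RK l h := by
    apply key_lemma WQ WK WV WO RQ RK RV E hQ hK X0 h l (le_of_lt hl)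
    intro hs
    have := hK (Function.update hs l h) l hl
    have hw : wPath WV WO (Function.update hs l h) l = wPath WV WO hs l :=
      wPath_congr _ _ _ _ l (fun i hi => Function.update_of_ne (Nat.ne_of_lt hi) _ _)
    have hr : rPath RV (Function.update hs l h) l = rPath RV hs l :=
      rPath_congr _ _ _ l (fun i hi => Function.update_of_ne (Nat.ne_of_lt hi) _ _)
    simpa only [hw, hr, Function.update_self] using this
  unfold attn
  rw [hq, hk]
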